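/- Exact forms are closed: for any local smooth f on (ℝ₊)^ℤ, the function ξ = ∂_{0,1}Γ_f with Γ_f = ∑_x τ_x f satisfies, for all x, y ∈ ℤ with |x - y| ≥ 2: ∂_{x,x+1} τ_y ξ = ∂_{y,y+1} τ_x ξ, and for adjacent indices: ∂_{x,x+1} τ_{x+1} ξ = ∂_{x+1,x+2} τ_x ξ + (∂_{x,x+1} log γ_{x+1,x+2}) τ_{x+1} ξ - (∂_{x+1,x+2} log γ_{x,x+1}) τ_x ξ. -/

import Mathlib

/-- Partial derivative with respect to the coordinate `x` of a configuration. -/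
noncomputable def pcoord (x : ℤ) (f : (ℤ → ℝ) → ℝ) : (ℤ → ℝ) → ℝ :=
  fun e => deriv (fun t => f (Function.update e x t)) (e x)

/-- The shift τ_y: (τ_y f)(E) = f(E_{·+y}). -/
def shiftC (y : ℤ) (f : (ℤ → ℝ) → ℝ) : (ℤ → ℝ) → ℝ :=
  fun e => f (fun z => e (z + y))

/-- The bond gradient ∂_{x,x+1} = γ_{x,x+1}(∂_{E_{x+1}} - ∂_{E_x}). -/
noncomputable def gradXY (γ : ℝ → ℝ → ℝ) (x : ℤ) (f : (ℤ → ℝ) → ℝ) : (ℤ → ℝ) → ℝ :=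
  fun e => γ (e x) (e (x + 1)) * (pcoord (x + 1) f e - pcoord x f e)

set_option linter.unusedVariables false

lemma gradXY_apply (γ : ℝ → ℝ → ℝ) (x : ℤ) (f : (ℤ → ℝ) → ℝ) (e : ℤ → ℝ) :
    gradXY γ x f e = γ (e x) (e (x + 1)) * (pcoord (x + 1) f e - pcoord x f e) := rfl

noncomputable def d1 (γ : ℝ → ℝ → ℝ) (a b : ℝ) : ℝ := deriv (fun t => γ t b) a
noncomputable def d2 (γ : ℝ → ℝ → ℝ) (a b : ℝ) : ℝ := deriv (fun t => γ a t) b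

lemma hasDeriv_d1 {γ : ℝ → ℝ → ℝ} (hγ : ContDiff ℝ (⊤ : ℕ∞) fun p : ℝ × ℝ => γ p.1 p.2)
    (a b : ℝ) : HasDerivAt (fun t => γ t b) (d1 γ a b) a := by
  have h : DifferentiableAt ℝ (fun t => γ t b) a := by
    exact ((hγ.differentiable (by simp)).comp
      (differentiable_id.prodMk (differentiable_const b))).differentiableAt
  exact h.hasDerivAt

lemma hasDeriv_d2 {γ : ℝ → ℝ → ℝ} (hγ : ContDiff ℝ (⊤ : ℕ∞) fun p : ℝ × ℝ => γ p.1 p.2)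
    (a b : ℝ) : HasDerivAt (fun t => γ a t) (d2 γ a b) b := by
  have h : DifferentiableAt ℝ (fun t => γ a t) b := by
    exact ((hγ.differentiable (by simp)).comp
      ((differentiable_const a).prodMk differentiable_id)).differentiableAt
  exact h.hasDerivAt

lemma pcoord_congr (f : (ℤ → ℝ) → ℝ) (g : ℝ → ℝ) (z : ℤ) (e : ℤ → ℝ)
    (h : ∀ t, f (Function.update e z t) = g t) : pcoord z f e = deriv g (e z) := by
  unfold pcoord; congr 1; funext t; exact h t

section
variable {γ : ℝ → ℝ → ℝ} {Γ : (ℤ → ℝ) → ℝ}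

lemma pcoord_grad_ne
    (hdiff2 : ∀ (x y : ℤ) (e : ℤ → ℝ),
      DifferentiableAt ℝ (fun t => pcoord y Γ (Function.update e x t)) (e x))
    (y z : ℤ) (hz1 : z ≠ y) (hz2 : z ≠ y + 1) (e : ℤ → ℝ) :
    pcoord z (gradXY γ y Γ) e
      = γ (e y) (e (y + 1)) * (pcoord z (pcoord (y + 1) Γ) e - pcoord z (pcoord y Γ) e) := by
  rw [pcoord_congr (gradXY γ y Γ)
    (fun t => γ (e y) (e (y + 1)) *
      (pcoord (y + 1) Γ (Function.update e z t) - pcoord y Γ (Function.update e z t))) z e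
    (by intro t
        rw [gradXY_apply, Function.update_of_ne (Ne.symm hz1), Function.update_of_ne (Ne.symm hz2)])]
  rw [deriv_const_mul _ ((hdiff2 z (y + 1) e).fun_sub (hdiff2 z y e)),
    deriv_fun_sub (hdiff2 z (y + 1) e) (hdiff2 z y e)]
  rfl

lemma pcoord_grad_fst (hγ : ContDiff ℝ (⊤ : ℕ∞) fun p : ℝ × ℝ => γ p.1 p.2)
    (hdiff2 : ∀ (x y : ℤ) (e : ℤ → ℝ),
      DifferentiableAt ℝ (fun t => pcoord y Γ (Function.update e x t)) (e x))
    (y : ℤ) (e : ℤ → ℝ) :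
    pcoord y (gradXY γ y Γ) e
      = d1 γ (e y) (e (y + 1)) * (pcoord (y + 1) Γ e - pcoord y Γ e)
        + γ (e y) (e (y + 1)) * (pcoord y (pcoord (y + 1) Γ) e - pcoord y (pcoord y Γ) e) := by
  rw [pcoord_congr (gradXY γ y Γ)
    (fun t => γ t (e (y + 1)) *
      (pcoord (y + 1) Γ (Function.update e y t) - pcoord y Γ (Function.update e y t))) y e
    (by intro t
        rw [gradXY_apply, Function.update_self, Function.update_of_ne (by omega)])]
  rw [deriv_fun_mul (hasDeriv_d1 hγ (e y) (e (y + 1))).differentiableAt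
    ((hdiff2 y (y + 1) e).fun_sub (hdiff2 y y e)),
    deriv_fun_sub (hdiff2 y (y + 1) e) (hdiff2 y y e),
    (hasDeriv_d1 hγ (e y) (e (y + 1))).deriv, Function.update_eq_self]
  rfl

lemma pcoord_grad_snd (hγ : ContDiff ℝ (⊤ : ℕ∞) fun p : ℝ × ℝ => γ p.1 p.2)
    (hdiff2 : ∀ (x y : ℤ) (e : ℤ → ℝ),
      DifferentiableAt ℝ (fun t => pcoord y Γ (Function.update e x t)) (e x))
    (y : ℤ) (e : ℤ → ℝ) :
    pcoord (y + 1) (gradXY γ y Γ) e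
      = d2 γ (e y) (e (y + 1)) * (pcoord (y + 1) Γ e - pcoord y Γ e)
        + γ (e y) (e (y + 1)) *
            (pcoord (y + 1) (pcoord (y + 1) Γ) e - pcoord (y + 1) (pcoord y Γ) e) := by
  rw [pcoord_congr (gradXY γ y Γ)
    (fun t => γ (e y) t *
      (pcoord (y + 1) Γ (Function.update e (y + 1) t) - pcoord y Γ (Function.update e (y + 1) t)))
    (y + 1) e
    (by intro t
        rw [gradXY_apply, Function.update_self, Function.update_of_ne (by omega)])]
  rw [deriv_fun_mul (hasDeriv_d2 hγ (e y) (e (y + 1))).differentiableAt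
    ((hdiff2 (y + 1) (y + 1) e).fun_sub (hdiff2 (y + 1) y e)),
    deriv_fun_sub (hdiff2 (y + 1) (y + 1) e) (hdiff2 (y + 1) y e),
    (hasDeriv_d2 hγ (e y) (e (y + 1))).deriv, Function.update_eq_self]
  rfl

lemma pcoord_log_ne (a b z : ℤ) (hz1 : z ≠ a) (hz2 : z ≠ b) (e : ℤ → ℝ) :
    pcoord z (fun e' => Real.log (γ (e' a) (e' b))) e = 0 := by
  rw [pcoord_congr _ (fun _ => Real.log (γ (e a) (e b))) z e
    (by intro t
        rw [Function.update_of_ne (Ne.symm hz1), Function.update_of_ne (Ne.symm hz2)])]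
  simp

lemma pcoord_log_fst (hγ : ContDiff ℝ (⊤ : ℕ∞) fun p : ℝ × ℝ => γ p.1 p.2)
    (hγpos : ∀ a b, 0 < γ a b) (a b : ℤ) (hab : b ≠ a) (e : ℤ → ℝ) :
    pcoord a (fun e' => Real.log (γ (e' a) (e' b))) e
      = d1 γ (e a) (e b) / γ (e a) (e b) := by
  rw [pcoord_congr _ (fun t => Real.log (γ t (e b))) a e
    (by intro t
        rw [Function.update_self, Function.update_of_ne hab])]
  exact ((hasDeriv_d1 hγ (e a) (e b)).log (ne_of_gt (hγpos _ _))).deriv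

lemma pcoord_log_snd (hγ : ContDiff ℝ (⊤ : ℕ∞) fun p : ℝ × ℝ => γ p.1 p.2)
    (hγpos : ∀ a b, 0 < γ a b) (a b : ℤ) (hab : a ≠ b) (e : ℤ → ℝ) :
    pcoord b (fun e' => Real.log (γ (e' a) (e' b))) e
      = d2 γ (e a) (e b) / γ (e a) (e b) := by
  rw [pcoord_congr _ (fun t => Real.log (γ (e a) t)) b e
    (by intro t
        rw [Function.update_self, Function.update_of_ne hab])]
  exact ((hasDeriv_d2 hγ (e a) (e b)).log (ne_of_gt (hγpos _ _))).deriv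

end

lemma update_shift (e : ℤ → ℝ) (y z : ℤ) (t : ℝ) :
    (fun w => Function.update e z t (w + y)) = Function.update (fun w => e (w + y)) (z - y) t := by
  funext w
  simp only [Function.update_apply]
  by_cases h : w + y = z
  · have h' : w = z - y := by omega
    simp [h, h']
  · have h2 : w ≠ z - y := by omega
    simp [h, h2]

lemma pcoord_shiftC (f : (ℤ → ℝ) → ℝ) (y z : ℤ) (e : ℤ → ℝ) :
    pcoord z (shiftC y f) e = pcoord (z - y) f (fun w => e (w + y)) := by
  unfold pcoord shiftC
  have h1 : (fun t => f fun w => Function.update e z t (w + y))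
      = fun t => f (Function.update (fun w => e (w + y)) (z - y) t) := by
    funext t; rw [update_shift]
  rw [h1]
  norm_num


lemma shift_grad (γ : ℝ → ℝ → ℝ) (Γ : (ℤ → ℝ) → ℝ) (hinv : ∀ y : ℤ, shiftC y Γ = Γ)
    (y : ℤ) : shiftC y (gradXY γ 0 Γ) = gradXY γ y Γ := by
  funext e
  have key : ∀ a : ℤ, pcoord a Γ (fun w => e (w + y)) = pcoord (a + y) Γ e := by
    intro a
    have h := pcoord_shiftC Γ y (a + y) e
    rw [hinv y] at h
    simpa using h.symm
  show gradXY γ 0 Γ (fun w => e (w + y)) = _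
  rw [gradXY_apply, gradXY_apply, key, key]
  norm_num [add_comm]


/-- exact forms are closed.  Γ = Γ_f = ∑_x τ_x f is the (formal)
shift-invariant sum of the translates of a local smooth f — encoded by the
hypotheses that Γ is shift invariant with smooth, commuting coordinate
derivatives (∂_{0,1}Γ_f being a finite sum since f is local).  Then
ξ = ∂_{0,1}Γ satisfies the closed-form relations: for |x-y| ≥ 2,
∂_{x,x+1}τ_y ξ = ∂_{y,y+1}τ_x ξ, and for adjacent bonds,
∂_{x,x+1}τ_{x+1}ξ = ∂_{x+1,x+2}τ_x ξ + (∂_{x,x+1} log γ_{x+1,x+2})τ_{x+1}ξ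
- (∂_{x+1,x+2} log γ_{x,x+1})τ_x ξ. -/
theorem stmt_13 (γ : ℝ → ℝ → ℝ)
    (hγ : ContDiff ℝ (⊤ : ℕ∞) fun p : ℝ × ℝ => γ p.1 p.2) (hγpos : ∀ a b, 0 < γ a b)
    (Γ : (ℤ → ℝ) → ℝ)
    (hinv : ∀ y : ℤ, shiftC y Γ = Γ)
    (hdiff : ∀ (x : ℤ) (e : ℤ → ℝ),
      DifferentiableAt ℝ (fun t => Γ (Function.update e x t)) (e x))
    (hdiff2 : ∀ (x y : ℤ) (e : ℤ → ℝ),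
      DifferentiableAt ℝ (fun t => pcoord y Γ (Function.update e x t)) (e x))
    (hcomm : ∀ x y : ℤ, pcoord x (pcoord y Γ) = pcoord y (pcoord x Γ)) :
    (∀ x y : ℤ, 2 ≤ |x - y| →
      gradXY γ x (shiftC y (gradXY γ 0 Γ)) = gradXY γ y (shiftC x (gradXY γ 0 Γ))) ∧
    (∀ (x : ℤ) (e : ℤ → ℝ),
      gradXY γ x (shiftC (x + 1) (gradXY γ 0 Γ)) e
        = gradXY γ (x + 1) (shiftC x (gradXY γ 0 Γ)) e
          + gradXY γ x (fun e' => Real.log (γ (e' (x + 1)) (e' (x + 2)))) e *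
              shiftC (x + 1) (gradXY γ 0 Γ) e
          - gradXY γ (x + 1) (fun e' => Real.log (γ (e' x) (e' (x + 1)))) e *
              shiftC x (gradXY γ 0 Γ) e) := by
  constructor
  · intro x y hxy
    have hxy' : 2 ≤ x - y ∨ 2 ≤ y - x := by
      rcases le_abs.mp hxy with h | h
      · left; exact h
      · right; omega
    rw [shift_grad γ Γ hinv, shift_grad γ Γ hinv]
    funext e
    rw [gradXY_apply, gradXY_apply,
      pcoord_grad_ne hdiff2 y (x + 1) (by omega) (by omega) e,
      pcoord_grad_ne hdiff2 y x (by omega) (by omega) e,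
      pcoord_grad_ne hdiff2 x (y + 1) (by omega) (by omega) e,
      pcoord_grad_ne hdiff2 x y (by omega) (by omega) e,
      congrFun (hcomm (x + 1) (y + 1)) e, congrFun (hcomm (x + 1) y) e,
      congrFun (hcomm x (y + 1)) e, congrFun (hcomm x y) e]
    ring
  · intro x e
    rw [shift_grad γ Γ hinv, shift_grad γ Γ hinv]
    have h2 : x + 1 + 1 = x + 2 := by ring
    simp only [gradXY_apply, h2]
    rw [pcoord_grad_fst hγ hdiff2 (x + 1) e,
      pcoord_grad_ne hdiff2 (x + 1) x (by omega) (by omega) e,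
      pcoord_grad_snd hγ hdiff2 x e,
      pcoord_grad_ne hdiff2 x (x + 2) (by omega) (by omega) e]
    simp only [h2]
    rw [pcoord_log_fst hγ hγpos (x + 1) (x + 2) (by omega) e,
      pcoord_log_ne (x + 1) (x + 2) x (by omega) (by omega) e,
      pcoord_log_snd hγ hγpos x (x + 1) (by omega) e,
      pcoord_log_ne x (x + 1) (x + 2) (by omega) (by omega) e,
      congrFun (hcomm (x + 1) (x + 2)) e,
      congrFun (hcomm x (x + 2)) e,
      congrFun (hcomm x (x + 1)) e]
    have g0 : γ (e x) (e (x + 1)) ≠ 0 := ne_of_gt (hγpos _ _)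
    have g1 : γ (e (x + 1)) (e (x + 2)) ≠ 0 := ne_of_gt (hγpos _ _)
    field_simp
    ring
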